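/- arXiv:2101.03763 — 2 statements merged into one kernel-verified Lean document; each statement's English description precedes it below -/
import Mathlib

section
/- (Theorem 3.1(i), common objective value at cluster points) There exists ζ ∈ ℝ such that F(x*, 0) = ζ for every cluster point x* of {x^k}; moreover ζ = lim_{k→∞} F(x^k, ε^k). -/
open Filter
open scoped BigOperators InnerProductSpace

noncomputable section

/-- Real n-dimensional Euclidean space. -/
abbrev Vec (n : ℕ) := EuclideanSpace ℝ (Fin n)

/-- The smoothed objective `F(x, ε) = f(x) + λ ∑ᵢ (|xᵢ| + εᵢ)^p`. -/
def Fobj (n : ℕ) (p lam : ℝ) (f : Vec n → ℝ) (z : Vec n) (ε : Fin n → ℝ) : ℝ :=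
  f z + lam * ∑ i, (|z i| + ε i) ^ p

/-- The merit function `ψ(x, y, ε) = F(x, ε) + (β/2)‖x − y‖²`. -/
def psiObj (n : ℕ) (p lam β : ℝ) (f : Vec n → ℝ) (z y : Vec n) (ε : Fin n → ℝ) : ℝ :=
  Fobj n p lam f z ε + β / 2 * ‖z - y‖ ^ 2

/-- The weighted-ℓ₁ subproblem objective at iteration `k`:
`⟨∇f(yₖ), z⟩ + (β/2)‖z − yₖ‖² + λ ∑ᵢ wᵢᵏ |zᵢ|` with `wᵢᵏ = p(|xᵢᵏ| + εᵢᵏ)^{p−1}`. -/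
def subObj (n : ℕ) (p lam β : ℝ) (f : Vec n → ℝ) (xk yk : Vec n) (εk : Fin n → ℝ)
    (z : Vec n) : ℝ :=
  ⟪gradient f yk, z⟫_ℝ + β / 2 * ‖z - yk‖ ^ 2
    + lam * ∑ i, (p * (|xk i| + εk i) ^ (p - 1)) * |z i|

/-- All the hypotheses of the EIRL1 algorithm (Algorithm 1) together with
Assumption 2.1.  The convention `x⁻¹ = x⁰` is encoded through truncated
subtraction on ℕ (`x (k-1) = x 0` for `k = 0`). -/
structure EIRL1 (n : ℕ) (p lam β Lf μ αbar : ℝ) (f : Vec n → ℝ)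
    (x y : ℕ → Vec n) (ε : ℕ → Fin n → ℝ) (α : ℕ → ℝ) : Prop where
  hn : 1 ≤ n
  hp0 : 0 < p
  hp1 : p < 1
  hlam : 0 < lam
  hμ0 : 0 < μ
  hμ1 : μ < 1
  hLf : 0 ≤ Lf
  hβ : Lf < β
  hconv : ConvexOn ℝ Set.univ f
  hdiff : ContDiff ℝ 1 f
  hlip : ∀ a b, ‖gradient f a - gradient f b‖ ≤ Lf * ‖a - b‖
  hαbar0 : 0 ≤ αbar
  hαbar1 : αbar < 1
  hα0 : ∀ k, 0 ≤ α k
  hα1 : ∀ k, α k ≤ αbar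
  hε0 : ∀ i, 0 < ε 0 i
  hεpos : ∀ k i, 0 < ε (k + 1) i
  hεdec : ∀ k i, ε (k + 1) i ≤ μ * ε k i
  hy : ∀ k, y k = x k + α k • (x k - x (k - 1))
  hmin : ∀ k z, z ≠ x (k + 1) →
    subObj n p lam β f (x k) (y k) (ε k) (x (k + 1)) < subObj n p lam β f (x k) (y k) (ε k) z
  hlevel : Bornology.IsBounded {z : Vec n | Fobj n p lam f z 0 ≤ Fobj n p lam f (x 0) (ε 0)}

/-! Each iterate minimizes a `β`-strongly convex model of `F(·, εᵏ)`. The descent lemma, convexity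
of `f` and concavity of `t ↦ tᵖ` (whose linearization at `|xᵢᵏ| + εᵢᵏ` is the weighted `ℓ₁` term)
turn the strong-convexity gap into the sufficient decrease
`F(xᵏ⁺¹, εᵏ⁺¹) + β/2 ‖xᵏ⁺¹ - xᵏ‖² ≤ F(xᵏ, εᵏ) + β ᾱ²/2 ‖xᵏ - xᵏ⁻¹‖²`.
So for `δ` strictly between `β ᾱ²/2` and `β/2`, `F(xᵏ, εᵏ) + δ ‖xᵏ - xᵏ⁻¹‖²` decreases by a
multiple of `‖xᵏ⁺¹ - xᵏ‖²`; the iterates stay in the bounded level set, where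
`F(·, 0)` is bounded below, hence it converges and the steps tend to `0`. As `εᵏ → 0`, `F(xᵏ, 0)`
has the same limit `ζ`, and continuity of `F(·, 0)` gives `F(x*, 0) = ζ` at every cluster point. -/

open Set Topology

section NormedSpace

variable {E : Type*} [NormedAddCommGroup E] [NormedSpace ℝ E]

lemma StrongConvexOn.add_le_of_isMinOn {s : Set E} {m : ℝ} {g : E → ℝ} {x y : E}
    (hg : StrongConvexOn s m g) (hmin : IsMinOn g s x) (hx : x ∈ s) (hy : y ∈ s) :
    g x + m / 2 * ‖y - x‖ ^ 2 ≤ g y := by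
  set c := m / 2 * ‖x - y‖ ^ 2
  have hseg : ∀ t ∈ Ioc (0 : ℝ) 1, g x + (1 - t) * c ≤ g y := by
    rintro t ⟨ht0, ht1⟩
    have hconv : g ((1 - t) • x + t • y) ≤ (1 - t) * g x + t * g y - (1 - t) * t * c :=
      hg.2 hx hy (sub_nonneg.2 ht1) ht0.le (sub_add_cancel 1 t)
    have hle : g x ≤ g ((1 - t) • x + t • y) :=
      hmin (hg.1 hx hy (sub_nonneg.2 ht1) ht0.le (sub_add_cancel 1 t))
    have : t * (g x + (1 - t) * c) ≤ t * g y := by linarith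
    exact le_of_mul_le_mul_left this ht0
  have hlim : Tendsto (fun t : ℝ => g x + (1 - t) * c) (𝓝[>] 0) (𝓝 (g x + c)) := by
    have : Continuous fun t : ℝ => g x + (1 - t) * c := by fun_prop
    simpa using (this.tendsto 0).mono_left nhdsWithin_le_nhds
  rw [norm_sub_rev]
  exact le_of_tendsto hlim (eventually_of_mem (Ioc_mem_nhdsGT zero_lt_one) hseg)

end NormedSpace

lemma ConvexOn.add_mul_sub_le_of_hasDerivAt {S : Set ℝ} {g : ℝ → ℝ} {g' x y : ℝ}
    (hg : ConvexOn ℝ S g) (hx : x ∈ S) (hy : y ∈ S) (hd : HasDerivAt g g' x) :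
    g x + g' * (y - x) ≤ g y := by
  rcases lt_trichotomy y x with hyx | rfl | hxy
  · have := hg.slope_le_of_hasDerivAt hy hx hyx hd
    rw [slope_def_field, div_le_iff₀ (sub_pos.2 hyx)] at this
    linarith
  · simp
  · have := hg.le_slope_of_hasDerivAt hx hy hxy hd
    rw [slope_def_field, le_div_iff₀ (sub_pos.2 hxy)] at this
    linarith

lemma ConcaveOn.le_add_mul_sub_of_hasDerivAt {S : Set ℝ} {g : ℝ → ℝ} {g' x y : ℝ}
    (hg : ConcaveOn ℝ S g) (hx : x ∈ S) (hy : y ∈ S) (hd : HasDerivAt g g' x) :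
    g y ≤ g x + g' * (y - x) := by
  have := hg.neg.add_mul_sub_le_of_hasDerivAt hx hy hd.neg
  simp only [Pi.neg_apply] at this
  linarith

lemma Real.rpow_le_rpow_add_deriv_mul_sub {p t s : ℝ} (hp0 : 0 ≤ p) (hp1 : p ≤ 1) (ht : 0 < t)
    (hs : 0 ≤ s) : s ^ p ≤ t ^ p + p * t ^ (p - 1) * (s - t) :=
  (Real.concaveOn_rpow hp0 hp1).le_add_mul_sub_of_hasDerivAt ht.le hs
    (Real.hasDerivAt_rpow_const (Or.inl ht.ne'))

section InnerProductSpace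

variable {E : Type*} [NormedAddCommGroup E] [InnerProductSpace ℝ E]

lemma strongConvexOn_univ_mul_norm_sub_sq (m : ℝ) (y : E) :
    StrongConvexOn univ m fun z => m / 2 * ‖z - y‖ ^ 2 := by
  rw [strongConvexOn_iff_convex]
  have hexpand : (fun z : E => m / 2 * ‖z - y‖ ^ 2 - m / 2 * ‖z‖ ^ 2)
      = fun z => (-m) • (innerSL ℝ y : E →L[ℝ] ℝ) z + m / 2 * ‖y‖ ^ 2 := by
    funext z
    rw [norm_sub_sq_real, innerSL_apply_apply, real_inner_comm, smul_eq_mul]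
    ring
  rw [hexpand]
  exact (((-m) • (innerSL ℝ y : E →L[ℝ] ℝ)).toLinearMap.convexOn convex_univ).add_const _

variable [CompleteSpace E] {f : E → ℝ}

lemma hasDerivAt_comp_add_smul (hf : Differentiable ℝ f) (a v : E) (t : ℝ) :
    HasDerivAt (fun s : ℝ => f (a + s • v)) ⟪gradient f (a + t • v), v⟫_ℝ t := by
  have hline : HasDerivAt (fun s : ℝ => a + s • v) v t := by
    simpa using ((hasDerivAt_id t).smul_const v).const_add a
  rw [← InnerProductSpace.toDual_apply_apply]
  exact (hf _).hasGradientAt.hasFDerivAt.comp_hasDerivAt t hline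

lemma ConvexOn.add_inner_gradient_le (hf : Differentiable ℝ f) (hc : ConvexOn ℝ univ f)
    (a b : E) : f a + ⟪gradient f a, b - a⟫_ℝ ≤ f b := by
  have hline : ConvexOn ℝ univ fun t : ℝ => f (a + t • (b - a)) := by
    have hcomp : f ∘ AffineMap.lineMap a b = fun t : ℝ => f (a + t • (b - a)) := by
      funext t
      simp [AffineMap.lineMap_apply, add_comm]
    simpa only [preimage_univ, hcomp] using hc.comp_affineMap (AffineMap.lineMap a b)
  simpa using hline.add_mul_sub_le_of_hasDerivAt (mem_univ 0) (mem_univ 1)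
    (hasDerivAt_comp_add_smul hf a (b - a) 0)


lemma le_add_inner_gradient_add_of_lipschitz {L : ℝ} (hf : Differentiable ℝ f)
    (hL : ∀ a b, ‖gradient f a - gradient f b‖ ≤ L * ‖a - b‖) (a b : E) :
    f b ≤ f a + ⟪gradient f a, b - a⟫_ℝ + L / 2 * ‖b - a‖ ^ 2 := by
  set v := b - a
  set G : ℝ → ℝ := fun t => f (a + t • v) - t * ⟪gradient f a, v⟫_ℝ - L / 2 * ‖v‖ ^ 2 * t ^ 2
  have hG : ∀ t, HasDerivAt G
      (⟪gradient f (a + t • v) - gradient f a, v⟫_ℝ - L * ‖v‖ ^ 2 * t) t := by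
    intro t
    have hquad : HasDerivAt (fun t : ℝ => L / 2 * ‖v‖ ^ 2 * t ^ 2) (L * ‖v‖ ^ 2 * t) t :=
      ((hasDerivAt_pow 2 t).const_mul _).congr_deriv (by push_cast; ring)
    rw [inner_sub_left]
    exact ((hasDerivAt_comp_add_smul hf a v t).sub
      ((hasDerivAt_id t).mul_const _ |>.congr_deriv (one_mul _))).sub hquad
  have hG' : ∀ t ∈ interior (Icc (0 : ℝ) 1), deriv G t ≤ 0 := by
    intro t ht
    rw [interior_Icc] at ht
    have hlip : ‖gradient f (a + t • v) - gradient f a‖ ≤ L * (t * ‖v‖) := by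
      simpa [norm_smul, abs_of_pos ht.1] using hL (a + t • v) a
    have := (real_inner_le_norm _ v).trans (mul_le_mul_of_nonneg_right hlip (norm_nonneg v))
    rw [(hG t).deriv]
    linarith
  have hanti : AntitoneOn G (Icc 0 1) :=
    antitoneOn_of_deriv_nonpos (convex_Icc 0 1)
      (fun t _ => (hG t).continuousAt.continuousWithinAt)
      (fun t _ => (hG t).differentiableAt.differentiableWithinAt) hG'
  have hG0 : G 0 = f a := by simp [G]
  have hG1 : G 1 = f b - ⟪gradient f a, v⟫_ℝ - L / 2 * ‖v‖ ^ 2 := by simp [G, v]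
  linarith [hanti (left_mem_Icc.2 zero_le_one) (right_mem_Icc.2 zero_le_one) zero_le_one]

end InnerProductSpace

section Objective

variable {n : ℕ} {p lam β : ℝ} {f : Vec n → ℝ}

lemma convexOn_sum_mul_abs {w : Fin n → ℝ} (hw : ∀ i, 0 ≤ w i) :
    ConvexOn ℝ univ fun z : Vec n => ∑ i, w i * |z i| := by
  refine ⟨convex_univ, fun a _ b _ s t hs ht _ => ?_⟩
  simp only [smul_eq_mul, Finset.mul_sum, ← Finset.sum_add_distrib]
  refine Finset.sum_le_sum fun i _ => ?_
  have hi : |(s • a + t • b) i| ≤ s * |a i| + t * |b i| := by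
    simpa [abs_mul, abs_of_nonneg hs, abs_of_nonneg ht] using abs_add_le (s * a i) (t * b i)
  nlinarith [hw i]

lemma strongConvexOn_subObj (hp : 0 ≤ p) (hlam : 0 ≤ lam) {xk yk : Vec n} {εk : Fin n → ℝ}
    (hεk : ∀ i, 0 ≤ εk i) : StrongConvexOn univ β (subObj n p lam β f xk yk εk) := by
  have hw : ∀ i, 0 ≤ p * (|xk i| + εk i) ^ (p - 1) := fun i =>
    mul_nonneg hp (Real.rpow_nonneg (add_nonneg (abs_nonneg _) (hεk i)) _)
  have hlin : ConvexOn ℝ univ fun z : Vec n => ⟪gradient f yk, z⟫_ℝ :=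
    (innerSL ℝ (gradient f yk) : Vec n →L[ℝ] ℝ).toLinearMap.convexOn convex_univ
  have h := (uniformConvexOn_zero.2 (hlin.add ((convexOn_sum_mul_abs hw).smul hlam))).add
    (strongConvexOn_univ_mul_norm_sub_sq β yk)
  rw [zero_add] at h
  unfold StrongConvexOn
  convert h using 1
  funext z
  simp only [subObj, Pi.add_apply, smul_eq_mul]
  ring

lemma Fobj_zero_le (hp : 0 ≤ p) (hlam : 0 ≤ lam) (z : Vec n) {e : Fin n → ℝ}
    (he : ∀ i, 0 ≤ e i) : Fobj n p lam f z 0 ≤ Fobj n p lam f z e := by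
  unfold Fobj
  gcongr with i
  · simp
  · simpa using he i

lemma Fobj_le_Fobj_zero_add (hp0 : 0 ≤ p) (hp1 : p ≤ 1) (hlam : 0 ≤ lam) (z : Vec n)
    {e : Fin n → ℝ} (he : ∀ i, 0 ≤ e i) :
    Fobj n p lam f z e ≤ Fobj n p lam f z 0 + lam * ∑ i, e i ^ p := by
  have hsub : ∑ i, (|z i| + e i) ^ p ≤ ∑ i, ((|z i| + 0) ^ p + e i ^ p) :=
    Finset.sum_le_sum fun i _ => by
      simpa using Real.rpow_add_le_add_rpow (abs_nonneg (z i)) (he i) hp0 hp1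
  rw [Finset.sum_add_distrib] at hsub
  simp only [Fobj, Pi.zero_apply]
  linarith [mul_le_mul_of_nonneg_left hsub hlam]

lemma continuous_Fobj_zero (hf : Continuous f) (hp : 0 ≤ p) :
    Continuous fun z : Vec n => Fobj n p lam f z 0 := by
  unfold Fobj
  refine hf.add (continuous_const.mul (continuous_finsetSum _ fun i _ => ?_))
  exact ((EuclideanSpace.proj i).continuous.abs.add continuous_const).rpow_const
    fun _ => Or.inr hp

lemma Fobj_add_sq_le_of_isMinOn {Lf : ℝ}
    (hp0 : 0 ≤ p) (hp1 : p ≤ 1) (hlam : 0 ≤ lam) (hβ : Lf ≤ β)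
    (hconv : ConvexOn ℝ univ f) (hdiff : Differentiable ℝ f)
    (hlip : ∀ a b, ‖gradient f a - gradient f b‖ ≤ Lf * ‖a - b‖)
    {X X' Y : Vec n} {e e' : Fin n → ℝ} (he : ∀ i, 0 < e i) (he' : ∀ i, 0 ≤ e' i)
    (hee' : ∀ i, e' i ≤ e i) (hmin : IsMinOn (subObj n p lam β f X Y e) univ X') :
    Fobj n p lam f X' e' + β / 2 * ‖X' - X‖ ^ 2
      ≤ Fobj n p lam f X e + β / 2 * ‖X - Y‖ ^ 2 := by
  set w : Fin n → ℝ := fun i => p * (|X i| + e i) ^ (p - 1)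
  have hstrong := (strongConvexOn_subObj hp0 hlam fun i => (he i).le).add_le_of_isMinOn hmin
    (mem_univ X') (mem_univ X)
  have hdesc := le_add_inner_gradient_add_of_lipschitz hdiff hlip Y X'
  have htangent := hconv.add_inner_gradient_le hdiff Y X
  have hpen : ∑ i, (|X' i| + e' i) ^ p
      ≤ ∑ i, (|X i| + e i) ^ p + (∑ i, w i * |X' i| - ∑ i, w i * |X i|) := by
    rw [← Finset.sum_sub_distrib, ← Finset.sum_add_distrib]
    refine Finset.sum_le_sum fun i _ => ?_
    have ht : 0 < |X i| + e i := add_pos_of_nonneg_of_pos (abs_nonneg _) (he i)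
    have hw : 0 ≤ w i := mul_nonneg hp0 (Real.rpow_nonneg ht.le _)
    have := Real.rpow_le_rpow_add_deriv_mul_sub hp0 hp1 ht
      (add_nonneg (abs_nonneg (X' i)) (he' i))
    nlinarith [hee' i]
  have hsq : Lf / 2 * ‖X' - Y‖ ^ 2 ≤ β / 2 * ‖X' - Y‖ ^ 2 := by gcongr
  simp only [subObj, inner_sub_right, norm_sub_rev X X'] at hstrong hdesc htangent ⊢
  simp only [Fobj]
  linarith [mul_le_mul_of_nonneg_left hpen hlam]

end Objective

lemma exists_tendsto_of_succ_add_le {u a : ℕ → ℝ} {c : ℝ} (hc : 0 < c) (ha : ∀ k, 0 ≤ a k)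
    (hu : ∀ k, u (k + 1) + c * a k ≤ u k) (hbdd : BddBelow (range u)) :
    ∃ ζ, Tendsto u atTop (𝓝 ζ) ∧ Tendsto a atTop (𝓝 0) := by
  have hanti : Antitone u :=
    antitone_nat_of_succ_le fun k => by linarith [hu k, mul_nonneg hc.le (ha k)]
  have hlim := tendsto_atTop_ciInf hanti hbdd
  refine ⟨_, hlim, ?_⟩
  have hgap : Tendsto (fun k => (u k - u (k + 1)) / c) atTop (𝓝 0) := by
    simpa using (hlim.sub (hlim.comp (tendsto_add_atTop_nat 1))).div_const c
  refine squeeze_zero ha (fun k => ?_) hgap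
  rw [le_div_iff₀ hc]
  linarith [hu k]

namespace EIRL1

variable {n : ℕ} {p lam β Lf μ αbar : ℝ} {f : Vec n → ℝ} {x y : ℕ → Vec n}
  {ε : ℕ → Fin n → ℝ} {α : ℕ → ℝ}

lemma eps_pos (H : EIRL1 n p lam β Lf μ αbar f x y ε α) : ∀ k i, 0 < ε k i
  | 0, i => H.hε0 i
  | k + 1, i => H.hεpos k i

lemma eps_succ_le (H : EIRL1 n p lam β Lf μ αbar f x y ε α) (k : ℕ) (i : Fin n) :
    ε (k + 1) i ≤ ε k i :=
  (H.hεdec k i).trans (mul_le_of_le_one_left (H.eps_pos k i).le H.hμ1.le)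

lemma tendsto_eps (H : EIRL1 n p lam β Lf μ αbar f x y ε α) (i : Fin n) :
    Tendsto (fun k => ε k i) atTop (𝓝 0) := by
  have hgeom : ∀ k, ε k i ≤ μ ^ k * ε 0 i := by
    intro k
    induction k with
    | zero => simp
    | succ k ih =>
      calc ε (k + 1) i ≤ μ * ε k i := H.hεdec k i
        _ ≤ μ * (μ ^ k * ε 0 i) := mul_le_mul_of_nonneg_left ih H.hμ0.le
        _ = μ ^ (k + 1) * ε 0 i := by ring
  refine squeeze_zero (fun k => (H.eps_pos k i).le) hgeom ?_
  simpa using (tendsto_pow_atTop_nhds_zero_of_lt_one H.hμ0.le H.hμ1).mul_const (ε 0 i)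

lemma isMinOn_subObj (H : EIRL1 n p lam β Lf μ αbar f x y ε α) (k : ℕ) :
    IsMinOn (subObj n p lam β f (x k) (y k) (ε k)) univ (x (k + 1)) := by
  refine isMinOn_univ_iff.2 fun z => ?_
  rcases eq_or_ne z (x (k + 1)) with rfl | hz
  · exact le_rfl
  · exact (H.hmin k z hz).le

lemma norm_sub_y_le (H : EIRL1 n p lam β Lf μ αbar f x y ε α) (k : ℕ) :
    ‖x k - y k‖ ≤ αbar * ‖x k - x (k - 1)‖ := by
  rw [H.hy k, sub_add_cancel_left, norm_neg, norm_smul, Real.norm_of_nonneg (H.hα0 k)]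
  exact mul_le_mul_of_nonneg_right (H.hα1 k) (norm_nonneg _)

lemma Fobj_succ_add_le (H : EIRL1 n p lam β Lf μ αbar f x y ε α) (k : ℕ) :
    Fobj n p lam f (x (k + 1)) (ε (k + 1)) + β / 2 * ‖x (k + 1) - x k‖ ^ 2
      ≤ Fobj n p lam f (x k) (ε k) + β / 2 * (αbar ^ 2 * ‖x k - x (k - 1)‖ ^ 2) := by
  have hdec := Fobj_add_sq_le_of_isMinOn H.hp0.le H.hp1.le H.hlam.le H.hβ.le H.hconv
    (H.hdiff.differentiable one_ne_zero) H.hlip (H.eps_pos k) (fun i => (H.eps_pos (k + 1) i).le)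
    (H.eps_succ_le k) (H.isMinOn_subObj k)
  have hy : ‖x k - y k‖ ^ 2 ≤ αbar ^ 2 * ‖x k - x (k - 1)‖ ^ 2 := by
    rw [← mul_pow]
    exact pow_le_pow_left₀ (norm_nonneg _) (H.norm_sub_y_le k) 2
  have hβ : 0 ≤ β / 2 := by linarith [H.hLf, H.hβ]
  linarith [mul_le_mul_of_nonneg_left hy hβ]

lemma bddBelow_Fobj_zero_levelSet (H : EIRL1 n p lam β Lf μ αbar f x y ε α) :
    BddBelow ((fun z => Fobj n p lam f z 0) ''
      {z | Fobj n p lam f z 0 ≤ Fobj n p lam f (x 0) (ε 0)}) := by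
  have hcont := continuous_Fobj_zero (lam := lam) H.hdiff.continuous H.hp0.le
  exact (Metric.isCompact_of_isClosed_isBounded (isClosed_le hcont continuous_const)
    H.hlevel).bddBelow_image hcont.continuousOn

lemma exists_tendsto_Fobj (H : EIRL1 n p lam β Lf μ αbar f x y ε α) :
    ∃ ζ, Tendsto (fun k => Fobj n p lam f (x k) (ε k)) atTop (𝓝 ζ) := by
  have hβ : 0 < β := H.hLf.trans_lt H.hβ
  have hα : αbar ^ 2 < 1 := by nlinarith [H.hαbar0, H.hαbar1]
  set δ := β * (1 + αbar ^ 2) / 4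
  set u : ℕ → ℝ := fun k => Fobj n p lam f (x k) (ε k) + δ * ‖x k - x (k - 1)‖ ^ 2
  have hc : 0 < β * (1 - αbar ^ 2) / 4 := by nlinarith
  have hu : ∀ k, u (k + 1) + β * (1 - αbar ^ 2) / 4 * ‖x (k + 1) - x k‖ ^ 2 ≤ u k := fun k => by
    have := H.Fobj_succ_add_le k
    simp only [u, δ, Nat.add_sub_cancel]
    nlinarith [mul_nonneg hc.le (sq_nonneg ‖x k - x (k - 1)‖)]
  have hanti : Antitone u := antitone_nat_of_succ_le fun k =>
    le_trans (le_add_of_nonneg_right (mul_nonneg hc.le (sq_nonneg _))) (hu k)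
  have hF0 : ∀ k, Fobj n p lam f (x k) 0 ≤ u k := fun k =>
    (Fobj_zero_le H.hp0.le H.hlam.le _ fun i => (H.eps_pos k i).le).trans
      (le_add_of_nonneg_right (by positivity))
  have hu0 : u 0 = Fobj n p lam f (x 0) (ε 0) := by simp [u]
  obtain ⟨b, hb⟩ := H.bddBelow_Fobj_zero_levelSet
  have hbdd : BddBelow (range u) := by
    refine ⟨b, ?_⟩
    rintro _ ⟨k, rfl⟩
    exact (hb ⟨x k, (hF0 k).trans (hu0 ▸ hanti (Nat.zero_le k)), rfl⟩).trans (hF0 k)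
  obtain ⟨ζ, hζ, hd⟩ := exists_tendsto_of_succ_add_le hc (fun k => sq_nonneg _) hu hbdd
  have hd' : Tendsto (fun k => ‖x k - x (k - 1)‖ ^ 2) atTop (𝓝 0) :=
    (tendsto_add_atTop_iff_nat 1).1 (by simpa using hd)
  exact ⟨ζ, by simpa [u] using hζ.sub (hd'.const_mul δ)⟩

lemma tendsto_Fobj_zero (H : EIRL1 n p lam β Lf μ αbar f x y ε α) {ζ : ℝ}
    (hζ : Tendsto (fun k => Fobj n p lam f (x k) (ε k)) atTop (𝓝 ζ)) :
    Tendsto (fun k => Fobj n p lam f (x k) 0) atTop (𝓝 ζ) := by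
  have hpen : Tendsto (fun k => lam * ∑ i, ε k i ^ p) atTop (𝓝 0) := by
    have := tendsto_finsetSum Finset.univ fun i _ =>
      (H.tendsto_eps i).rpow_const (Or.inr H.hp0.le)
    simpa [Real.zero_rpow H.hp0.ne'] using this.const_mul lam
  have hε : ∀ k i, 0 ≤ ε k i := fun k i => (H.eps_pos k i).le
  refine tendsto_of_tendsto_of_tendsto_of_le_of_le (by simpa using hζ.sub hpen) hζ
    (fun k => ?_) fun k => Fobj_zero_le H.hp0.le H.hlam.le _ (hε k)
  linarith [Fobj_le_Fobj_zero_add (f := f) H.hp0.le H.hp1.le H.hlam.le (x k) (hε k)]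

end EIRL1

/-- Theorem 3.1(i): `F` attains a common value `ζ` at every cluster point of
`{xᵏ}`, and `ζ = lim_k F(xᵏ, εᵏ)`. -/
theorem stmt_11 (n : ℕ) (p lam β Lf μ αbar : ℝ) (f : Vec n → ℝ)
    (x y : ℕ → Vec n) (ε : ℕ → Fin n → ℝ) (α : ℕ → ℝ)
    (H : EIRL1 n p lam β Lf μ αbar f x y ε α) :
    ∃ ζ : ℝ,
      (∀ xstar : Vec n, MapClusterPt xstar atTop x → Fobj n p lam f xstar 0 = ζ) ∧
      Tendsto (fun k => Fobj n p lam f (x k) (ε k)) atTop (nhds ζ) := by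
  obtain ⟨ζ, hζ⟩ := H.exists_tendsto_Fobj
  refine ⟨ζ, fun xstar hxstar => ?_, hζ⟩
  have hcont := continuous_Fobj_zero (lam := lam) H.hdiff.continuous H.hp0.le
  exact eq_of_nhds_neBot
    ((hxstar.continuousAt_comp hcont.continuousAt).clusterPt.mono (H.tendsto_Fobj_zero hζ))
end
end

section
/- (δ-gradient bound, key step in Lemma 3.2(i)) Let C > 0 satisfy ‖∇f(y^k) + β(x^{k+1} − y^k)‖_∞ < C for all k, let K, I* be as in the stable-support property, and set δ^k_i = √(ε^k_i). Then for all sufficiently large k, Σ_{i∈I*} 2 λ w_i^k δ_i^k ≤ (2C√μ/(1−√μ)) · (Σ_{i∈I*} δ_i^{k−1} − Σ_{i∈I*} δ_i^k). -/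
open Filter
open scoped BigOperators InnerProductSpace

noncomputable section

lemma eirl1_eps_pos (n : ℕ) (p lam β Lf μ αbar : ℝ) (f : Vec n → ℝ)
    (x y : ℕ → Vec n) (ε : ℕ → Fin n → ℝ) (α : ℕ → ℝ)
    (H : EIRL1 n p lam β Lf μ αbar f x y ε α) : ∀ k i, 0 < ε k i := by
  intro k i
  cases k with
  | zero => exact H.hε0 i
  | succ m => exact H.hεpos m i

lemma eirl1_key (n : ℕ) (p lam β Lf μ αbar : ℝ) (f : Vec n → ℝ)
    (x y : ℕ → Vec n) (ε : ℕ → Fin n → ℝ) (α : ℕ → ℝ)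
    (H : EIRL1 n p lam β Lf μ αbar f x y ε α) (k : ℕ) (i : Fin n)
    (hx : x (k + 1) i ≠ 0) :
    lam * (p * (|x k i| + ε k i) ^ (p - 1)) ≤
      |gradient f (y k) i + β * (x (k + 1) i - y k i)| := by
  have hβ0 : 0 < β := lt_of_le_of_lt H.hLf H.hβ
  have hεp : 0 < ε k i := eirl1_eps_pos n p lam β Lf μ αbar f x y ε α H k i
  set w : ℝ := p * (|x k i| + ε k i) ^ (p - 1) with hw
  have hw0 : 0 < w := by
    apply mul_pos H.hp0
    exact Real.rpow_pos_of_pos (by positivity) _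
  set s : ℝ := if 0 < x (k + 1) i then 1 else -1 with hs
  set c : ℝ := gradient f (y k) i + β * (x (k + 1) i - y k i) + lam * w * s with hc
  have habs : ∀ t : ℝ, |t| < |x (k + 1) i| →
      |x (k + 1) i + t| - |x (k + 1) i| = s * t := by
    intro t ht
    rcases lt_trichotomy (x (k + 1) i) 0 with h | h | h
    · have hs' : s = -1 := by simp [hs, not_lt.mpr h.le, h.not_gt]
      rw [abs_of_neg h] at ht
      have h1 : x (k + 1) i + t < 0 := by
        rcases abs_lt.mp ht with ⟨ha, hb⟩; linarith
      rw [abs_of_neg h, abs_of_neg h1, hs']; ring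
    · exact absurd h hx
    · have hs' : s = 1 := by simp [hs, h]
      rw [abs_of_pos h] at ht
      have h1 : 0 < x (k + 1) i + t := by
        rcases abs_lt.mp ht with ⟨ha, hb⟩; linarith
      rw [abs_of_pos h, abs_of_pos h1, hs']; ring
  have hdiff : ∀ t : ℝ, |t| < |x (k + 1) i| →
      subObj n p lam β f (x k) (y k) (ε k) (x (k + 1) + EuclideanSpace.single i t)
        - subObj n p lam β f (x k) (y k) (ε k) (x (k + 1)) = t * c + β / 2 * t ^ 2 := by
    intro t ht
    have h1 : ⟪gradient f (y k), x (k + 1) + EuclideanSpace.single i t⟫_ℝ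
        = ⟪gradient f (y k), x (k + 1)⟫_ℝ + t * gradient f (y k) i := by
      rw [inner_add_right]
      congr 1
      simpa using EuclideanSpace.inner_single_right (𝕜 := ℝ) i t (gradient f (y k))
    have h2 : ‖(x (k + 1) + EuclideanSpace.single i t) - y k‖ ^ 2
        = ‖x (k + 1) - y k‖ ^ 2 + 2 * (t * (x (k + 1) i - y k i)) + t ^ 2 := by
      have e : (x (k + 1) + EuclideanSpace.single i t) - y k
          = (x (k + 1) - y k) + EuclideanSpace.single i t := by abel
      rw [e, norm_add_sq_real]
      have h : ⟪x (k + 1) - y k, EuclideanSpace.single i t⟫_ℝ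
          = t * (x (k + 1) i - y k i) := by
        simpa using EuclideanSpace.inner_single_right (𝕜 := ℝ) i t (x (k + 1) - y k)
      rw [h, EuclideanSpace.norm_single]
      simp [Real.norm_eq_abs, sq_abs]
    have h3 : (∑ j, (p * (|x k j| + ε k j) ^ (p - 1))
            * |(x (k + 1) + EuclideanSpace.single i t) j|)
        - ∑ j, (p * (|x k j| + ε k j) ^ (p - 1)) * |x (k + 1) j|
        = w * (|x (k + 1) i + t| - |x (k + 1) i|) := by
      rw [← Finset.sum_sub_distrib, Finset.sum_eq_single i]
      · have e : (x (k + 1) + EuclideanSpace.single i t) i = x (k + 1) i + t := by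
          simp [EuclideanSpace.single_apply]
        rw [e, hw]; ring
      · intro j _ hj
        have e : (x (k + 1) + EuclideanSpace.single i t) j = x (k + 1) j := by
          simp [EuclideanSpace.single_apply, hj]
        rw [e]; ring
      · intro h; exact absurd (Finset.mem_univ i) h
    have h4 := habs t ht
    unfold subObj
    linear_combination h1 + (β / 2) * h2 + lam * h3 + lam * w * h4
  have hc0 : c = 0 := by
    by_contra hne
    have hcabs : 0 < |c| := abs_pos.mpr hne
    have hxabs : 0 < |x (k + 1) i| := abs_pos.mpr hx
    set r : ℝ := min (1 / β) (|x (k + 1) i| / (2 * |c|)) with hr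
    have hr0 : 0 < r := lt_min (by positivity) (by positivity)
    set t : ℝ := -c * r with htdef
    have ht0 : t ≠ 0 := by
      simp only [htdef, neg_mul, neg_ne_zero]
      exact mul_ne_zero hne hr0.ne'
    have htlt : |t| < |x (k + 1) i| := by
      have : |t| = |c| * r := by
        rw [htdef, abs_mul, abs_neg, abs_of_pos hr0]
      rw [this]
      have h1 : r ≤ |x (k + 1) i| / (2 * |c|) := min_le_right _ _
      have h2 : |c| * r ≤ |x (k + 1) i| / 2 := by
        calc |c| * r ≤ |c| * (|x (k + 1) i| / (2 * |c|)) :=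
              mul_le_mul_of_nonneg_left h1 (abs_nonneg c)
          _ = |x (k + 1) i| / 2 := by field_simp
      linarith
    have hz : x (k + 1) + EuclideanSpace.single i t ≠ x (k + 1) := by
      intro h
      apply ht0
      have := congrFun (congrArg (WithLp.equiv 2 _) h) i
      simpa [EuclideanSpace.single_apply] using this
    have hlt := H.hmin k (x (k + 1) + EuclideanSpace.single i t) hz
    have hd := hdiff t htlt
    have hpos : 0 < t * c + β / 2 * t ^ 2 := by rw [← hd]; linarith
    have hval : t * c + β / 2 * t ^ 2 = c ^ 2 * r * (β * r / 2 - 1) := by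
      rw [htdef]; ring
    have hr1 : r ≤ 1 / β := min_le_left _ _
    have hβr : β * r ≤ 1 := by
      calc β * r ≤ β * (1 / β) := mul_le_mul_of_nonneg_left hr1 hβ0.le
        _ = 1 := by field_simp
    have hcsq : 0 < c ^ 2 := by positivity
    rw [hval] at hpos
    nlinarith [mul_pos hcsq hr0,
      mul_nonneg (mul_pos hcsq hr0).le (by linarith : (0:ℝ) ≤ 1 - β * r)]
  have hwabs : |gradient f (y k) i + β * (x (k + 1) i - y k i)| = lam * w := by
    have h' : gradient f (y k) i + β * (x (k + 1) i - y k i) = -(lam * w * s) := by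
      linarith [hc0]
    rw [h', abs_neg, abs_mul, abs_of_pos (mul_pos H.hlam hw0)]
    rcases ite_eq_or_eq (0 < x (k + 1) i) (1:ℝ) (-1) with h | h <;>
      rw [hs, h] <;> norm_num
  rw [hwabs]

/-- δ-gradient bound (key step in Lemma 3.2(i)):
`∑_{i∈I*} 2λ wᵢᵏ δᵢᵏ ≤ (2C√μ/(1−√μ)) (∑_{i∈I*} δᵢᵏ⁻¹ − ∑_{i∈I*} δᵢᵏ)`
for all sufficiently large `k`, where `δᵢᵏ = √εᵢᵏ`. -/
theorem stmt_14 (n : ℕ) (p lam β Lf μ αbar : ℝ) (f : Vec n → ℝ)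
    (x y : ℕ → Vec n) (ε : ℕ → Fin n → ℝ) (α : ℕ → ℝ)
    (H : EIRL1 n p lam β Lf μ αbar f x y ε α)
    (C : ℝ) (hC0 : 0 < C)
    (hC : ∀ k, ∀ i, |gradient f (y k) i + β * (x (k + 1) i - y k i)| < C)
    (K : ℕ) (Istar : Finset (Fin n))
    (hsupp : ∀ k > K, ∀ i, i ∈ Istar ↔ x k i ≠ 0) :
    ∃ N : ℕ, ∀ k ≥ N,
      ∑ i ∈ Istar,
          2 * lam * (p * (|x k i| + ε k i) ^ (p - 1)) * Real.sqrt (ε k i)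
        ≤ 2 * C * Real.sqrt μ / (1 - Real.sqrt μ) *
            (∑ i ∈ Istar, Real.sqrt (ε (k - 1) i) - ∑ i ∈ Istar, Real.sqrt (ε k i)) := by
  have hsμ0 : 0 < Real.sqrt μ := Real.sqrt_pos.mpr H.hμ0
  have hsμ1 : Real.sqrt μ < 1 := by
    rw [show (1:ℝ) = Real.sqrt 1 by simp]
    exact Real.sqrt_lt_sqrt H.hμ0.le H.hμ1
  refine ⟨K + 1, fun k hk => ?_⟩
  obtain ⟨m, rfl⟩ : ∃ m, k = m + 1 := ⟨k - 1, by omega⟩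
  have hm1 : m + 1 - 1 = m := by omega
  rw [hm1, ← Finset.sum_sub_distrib, Finset.mul_sum]
  apply Finset.sum_le_sum
  intro i hi
  have hxne : x (m + 1 + 1) i ≠ 0 := (hsupp (m + 1 + 1) (by omega) i).mp hi
  have hkey := eirl1_key n p lam β Lf μ αbar f x y ε α H (m + 1) i hxne
  have hwC : lam * (p * (|x (m + 1) i| + ε (m + 1) i) ^ (p - 1)) < C :=
    lt_of_le_of_lt hkey (hC (m + 1) i)
  set a := Real.sqrt (ε m i) with ha
  set b := Real.sqrt (ε (m + 1) i) with hb
  have hb0 : 0 ≤ b := Real.sqrt_nonneg _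
  have hba : b ≤ Real.sqrt μ * a := by
    rw [ha, hb, ← Real.sqrt_mul H.hμ0.le]
    exact Real.sqrt_le_sqrt (H.hεdec m i)
  have step1 : 2 * lam * (p * (|x (m + 1) i| + ε (m + 1) i) ^ (p - 1)) * b
      ≤ 2 * C * b := by
    have := mul_le_mul_of_nonneg_right hwC.le hb0
    nlinarith
  have step2 : 2 * C * b ≤ 2 * C * Real.sqrt μ / (1 - Real.sqrt μ) * (a - b) := by
    rw [div_mul_eq_mul_div, le_div_iff₀ (by linarith)]
    have h1 : 2 * C * b ≤ 2 * C * (Real.sqrt μ * a) :=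
      mul_le_mul_of_nonneg_left hba (by linarith)
    nlinarith
  linarith
end
end
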